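/- Let T be an (m, β) row paving of A_=, let L be a Hoffman constant for the system, assume n_i ≥ 1, and set p = βm/(n_i + βm). For x ∈ ℝ^d, let x_τ denote the orthogonal projection of x onto {y : A_τ y = b_τ} for τ ∈ T, and let x_i = x − max(⟨a_i, x⟩ − b_i, 0)·a_i for i ∈ I_≤. Then the one-step expected squared distance of Algorithm 1 satisfies p·(1/m)·Σ_{τ∈T} d(x_τ, S)² + (1 − p)·(1/n_i)·Σ_{i∈I_≤} d(x_i, S)² ≤ (1 − 1/(L²(n_i + βm)))·d(x, S)². -/

import Mathlib

open scoped RealInnerProductSpace BigOperators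

noncomputable section

/-- An `(m, β)` row paving of the rows of `a` indexed by `I`: a partition of `I` into `m`
nonempty blocks `T 0, …, T (m-1)` such that for each block `τ`, the row submatrix `A_τ` with
rows `(a i)_{i ∈ τ}` satisfies `λ_max(A_τ A_τ*) ≤ β`, stated equivalently as the quadratic
bound `‖A_τ x‖² = ∑_{i ∈ τ} ⟪a i, x⟫² ≤ β ‖x‖²` for all `x`. -/
def IsRowPaving {n d : ℕ} (a : Fin n → EuclideanSpace ℝ (Fin d)) (I : Finset (Fin n))
    (m : ℕ) (β : ℝ) (T : Fin m → Finset (Fin n)) : Prop :=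
  (∀ k, (T k).Nonempty) ∧
  (∀ k l, k ≠ l → Disjoint (T k) (T l)) ∧
  (Finset.univ.biUnion T = I) ∧
  (∀ k, ∀ x : EuclideanSpace ℝ (Fin d), ∑ i ∈ T k, ⟪a i, x⟫ ^ 2 ≤ β * ‖x‖ ^ 2)

/-!
Let `z` be a point of `S` nearest to `x`. Every candidate next iterate `x'` is the projection of `x`
onto a convex set containing `z`, hence `‖x' - z‖² ≤ ‖x - z‖² - ‖x - x'‖²`. For `x_τ` the paving
bound gives `‖x - x_τ‖² ≥ ‖(A x - b)_τ‖² / β`, and for `x_i` the step length is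
`(⟪a_i, x⟫ - b_i)₊`. With the weights `p / m = β / (n_i + β m)` and `(1 - p) / n_i = 1 / (n_i + β m)`
the average of these bounds is `d(x, S)² - ‖e(A x - b)‖² / (n_i + β m)`, and Hoffman's bound
`d(x, S)² ≤ L² ‖e(A x - b)‖²` finishes the argument.
-/

theorem Metric.infDist_sq_le_dist_sq {α : Type*} [PseudoMetricSpace α] {S : Set α} {z : α}
    (hz : z ∈ S) (y : α) : Metric.infDist y S ^ 2 ≤ dist y z ^ 2 :=
  pow_le_pow_left₀ Metric.infDist_nonneg (Metric.infDist_le_dist_of_mem hz) 2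

section InnerProductSpace

variable {F : Type*} [NormedAddCommGroup F] [InnerProductSpace ℝ F]

theorem Convex.norm_sub_sq_add_norm_sub_sq_le {K : Set F} (hK : Convex ℝ K) {x p z : F}
    (hp : p ∈ K) (hmin : ∀ y ∈ K, ‖x - p‖ ≤ ‖x - y‖) (hz : z ∈ K) :
    ‖x - p‖ ^ 2 + ‖p - z‖ ^ 2 ≤ ‖x - z‖ ^ 2 := by
  have : Nonempty K := ⟨⟨p, hp⟩⟩
  have hinf : ‖x - p‖ = ⨅ w : K, ‖x - w‖ :=
    le_antisymm (le_ciInf fun w => hmin w w.2)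
      (ciInf_le ⟨0, Set.forall_mem_range.2 fun _ => norm_nonneg _⟩ (⟨p, hp⟩ : K))
  have hobtuse := (norm_eq_iInf_iff_real_inner_le_zero hK hp).1 hinf z hz
  have hsplit : x - z = (x - p) + (p - z) := by abel
  rw [hsplit, norm_add_sq_real, ← neg_sub z p, inner_neg_right]
  linarith

theorem convex_setOf_forall_inner_eq {ι : Type*} (τ : Finset ι) (a : ι → F) (b : ι → ℝ) :
    Convex ℝ {y : F | ∀ i ∈ τ, ⟪a i, y⟫ = b i} := by
  intro y hy y' hy' s t _ _ hst i hi
  simp only [inner_add_right, inner_smul_right, hy i hi, hy' i hi, ← add_mul, hst, one_mul]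

theorem isClosed_setOf_inner_eq_and_inner_le {ι : Type*} (a : ι → F) (b : ι → ℝ)
    (P Q : ι → Prop) :
    IsClosed {x : F | (∀ i, P i → ⟪a i, x⟫ = b i) ∧ (∀ i, Q i → ⟪a i, x⟫ ≤ b i)} := by
  simp only [Set.ofPred_and, Set.ofPred_forall]
  exact (isClosed_iInter fun i => isClosed_iInter fun _ =>
      isClosed_eq (by fun_prop) (by fun_prop)).inter
    (isClosed_iInter fun i => isClosed_iInter fun _ => isClosed_le (by fun_prop) (by fun_prop))

theorem mul_infDist_sq_add_sum_sq_le_of_isMin {ι : Type*} {τ : Finset ι} {a : ι → F}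
    {b : ι → ℝ} {β : ℝ} (hβ : 0 ≤ β) (hbound : ∀ v, ∑ i ∈ τ, ⟪a i, v⟫ ^ 2 ≤ β * ‖v‖ ^ 2)
    {S : Set F} {x p z : F} (hp : ∀ i ∈ τ, ⟪a i, p⟫ = b i)
    (hmin : ∀ y, (∀ i ∈ τ, ⟪a i, y⟫ = b i) → ‖x - p‖ ≤ ‖x - y‖)
    (hzS : z ∈ S) (hz : ∀ i ∈ τ, ⟪a i, z⟫ = b i) :
    β * Metric.infDist p S ^ 2 + ∑ i ∈ τ, (⟪a i, x⟫ - b i) ^ 2 ≤ β * dist x z ^ 2 := by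
  have hres : ∑ i ∈ τ, (⟪a i, x⟫ - b i) ^ 2 ≤ β * ‖x - p‖ ^ 2 := by
    convert hbound (x - p) using 2 with i hi
    rw [inner_sub_right, hp i hi]
  have hpyth := (convex_setOf_forall_inner_eq τ a b).norm_sub_sq_add_norm_sub_sq_le hp hmin hz
  have hdist := Metric.infDist_sq_le_dist_sq hzS p
  rw [dist_eq_norm] at hdist ⊢
  nlinarith

theorem infDist_sub_smul_sq_add_sq_le {a x z : F} {c : ℝ} {S : Set F} (ha : ‖a‖ = 1)
    (hzS : z ∈ S) (hz : ⟪a, z⟫ ≤ c) :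
    Metric.infDist (x - max (⟪a, x⟫ - c) 0 • a) S ^ 2 + max (⟪a, x⟫ - c) 0 ^ 2 ≤
      dist x z ^ 2 := by
  set t := max (⟪a, x⟫ - c) 0
  have ht : t ^ 2 ≤ t * ⟪a, x - z⟫ := by
    rcases le_total (⟪a, x⟫ - c) 0 with h | h
    · simp [t, max_eq_right h]
    · rw [sq, inner_sub_right, show t = ⟪a, x⟫ - c from max_eq_left h]
      exact mul_le_mul_of_nonneg_left (by linarith) h
  have hexp : ‖x - t • a - z‖ ^ 2 = ‖x - z‖ ^ 2 - 2 * (t * ⟪a, x - z⟫) + t ^ 2 := by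
    rw [sub_right_comm, norm_sub_sq_real, real_inner_smul_right, real_inner_comm, norm_smul, ha,
      Real.norm_eq_abs, mul_one, sq_abs]
  have hdist := Metric.infDist_sq_le_dist_sq hzS (x - t • a)
  rw [dist_eq_norm] at hdist ⊢
  linarith

end InnerProductSpace

namespace IsRowPaving

variable {n d m : ℕ} {a : Fin n → EuclideanSpace ℝ (Fin d)} {I : Finset (Fin n)} {β : ℝ}
  {T : Fin m → Finset (Fin n)}

theorem subset (hT : IsRowPaving a I m β T) (k : Fin m) : T k ⊆ I :=
  hT.2.2.1 ▸ Finset.subset_biUnion_of_mem T (Finset.mem_univ k)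

theorem sum_sum_eq (hT : IsRowPaving a I m β T) (f : Fin n → ℝ) :
    ∑ k, ∑ i ∈ T k, f i = ∑ i ∈ I, f i := by
  rw [← hT.2.2.1, Finset.sum_biUnion fun k _ l _ hkl => hT.2.1 k l hkl]

end IsRowPaving

theorem Fin.card_filter_le_val (ne ni : ℕ) :
    (Finset.univ.filter fun i : Fin (ne + ni) => ne ≤ (i : ℕ)).card = ni := by
  rw [Finset.card_filter, Fin.sum_univ_add]
  simp

theorem weighted_mean_le_of_hoffman {m ni β L D R A₁ A₂ : ℝ} (hm : 0 < m) (hni : 0 < ni)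
    (hβ : 0 ≤ β) (hD : 0 ≤ D) (hR : 0 ≤ R) (hHoffman : D ≤ L * √R)
    (hA : β * A₁ + A₂ + R ≤ (ni + β * m) * D ^ 2) :
    β * m / (ni + β * m) * (1 / m * A₁) + (1 - β * m / (ni + β * m)) * (1 / ni * A₂) ≤
      (1 - 1 / (L ^ 2 * (ni + β * m))) * D ^ 2 := by
  have hN : 0 < ni + β * m := by positivity
  have hD2 : D ^ 2 ≤ L ^ 2 * R := by
    simpa [mul_pow, Real.sq_sqrt hR] using pow_le_pow_left₀ hD hHoffman 2
  have hmean : β * m / (ni + β * m) * (1 / m * A₁) + (1 - β * m / (ni + β * m)) * (1 / ni * A₂)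
      = (β * A₁ + A₂) / (ni + β * m) := by
    field_simp
    ring
  have hgain : D ^ 2 / L ^ 2 ≤ R := div_le_of_le_mul₀ (sq_nonneg L) hR (by linarith)
  have hrhs : (1 - 1 / (L ^ 2 * (ni + β * m))) * D ^ 2 * (ni + β * m) =
      (ni + β * m) * D ^ 2 - D ^ 2 / L ^ 2 := by
    field_simp
  rw [hmean, div_le_iff₀ hN, hrhs]
  linarith

theorem algorithm1_one_step_expected_progress_general
    {ne ni d m : ℕ} (hni : 0 < ni) (hm : 0 < m)
    (a : Fin (ne + ni) → EuclideanSpace ℝ (Fin d)) (b : Fin (ne + ni) → ℝ)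
    (ha : ∀ i, ‖a i‖ = 1)
    (S : Set (EuclideanSpace ℝ (Fin d)))
    (hSdef : S = {x | (∀ i : Fin (ne + ni), (i : ℕ) < ne → ⟪a i, x⟫ = b i) ∧
                      (∀ i : Fin (ne + ni), ne ≤ (i : ℕ) → ⟪a i, x⟫ ≤ b i)})
    (hSne : S.Nonempty)
    (β : ℝ) (hβ : 0 < β)
    (T : Fin m → Finset (Fin (ne + ni)))
    (hT : IsRowPaving a (Finset.univ.filter fun i : Fin (ne + ni) => (i : ℕ) < ne) m β T)
    (L : ℝ)
    (hHoffman : ∀ x : EuclideanSpace ℝ (Fin d), Metric.infDist x S ≤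
      L * Real.sqrt (∑ i : Fin (ne + ni), (if (i : ℕ) < ne then ⟪a i, x⟫ - b i
                           else max (⟪a i, x⟫ - b i) 0) ^ 2))
    (x : EuclideanSpace ℝ (Fin d))
    -- xτ k is the orthogonal projection of x onto {y : A_(T k) y = b_(T k)}
    (xτ : Fin m → EuclideanSpace ℝ (Fin d))
    (hproj : ∀ k : Fin m,
      (∀ i ∈ T k, ⟪a i, xτ k⟫ = b i) ∧
      (∀ y : EuclideanSpace ℝ (Fin d), (∀ i ∈ T k, ⟪a i, y⟫ = b i) → ‖x - xτ k‖ ≤ ‖x - y‖)) :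
    (β * m / (ni + β * m)) * ((1 / m) * ∑ k, Metric.infDist (xτ k) S ^ 2) +
        (1 - β * m / (ni + β * m)) *
          ((1 / ni) * ∑ i ∈ (Finset.univ.filter fun i : Fin (ne + ni) => ne ≤ (i : ℕ)),
            Metric.infDist (x - max (⟪a i, x⟫ - b i) 0 • a i) S ^ 2) ≤
      (1 - 1 / (L ^ 2 * (ni + β * m))) * Metric.infDist x S ^ 2 := by
  have hS : IsClosed S := hSdef ▸ isClosed_setOf_inner_eq_and_inner_le a b _ _
  obtain ⟨z, hzS, hxz⟩ := hS.exists_infDist_eq_dist hSne x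
  obtain ⟨hz_eq, hz_le⟩ : _ ∧ _ := hSdef ▸ hzS
  have hblocks : β * ∑ k, Metric.infDist (xτ k) S ^ 2 +
      ∑ i ∈ Finset.univ.filter (fun i : Fin (ne + ni) => (i : ℕ) < ne), (⟪a i, x⟫ - b i) ^ 2 ≤
        m * (β * dist x z ^ 2) := by
    rw [← hT.sum_sum_eq, Finset.mul_sum, ← Finset.sum_add_distrib]
    refine (Finset.sum_le_card_nsmul _ _ (β * dist x z ^ 2) fun k _ => ?_).trans_eq (by simp)
    exact mul_infDist_sq_add_sum_sq_le_of_isMin hβ.le (hT.2.2.2 k) (hproj k).1 (hproj k).2 hzS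
      fun i hi => hz_eq i (Finset.mem_filter.1 (hT.subset k hi)).2
  have hrows : ∑ i ∈ Finset.univ.filter (fun i : Fin (ne + ni) => ne ≤ (i : ℕ)),
        (Metric.infDist (x - max (⟪a i, x⟫ - b i) 0 • a i) S ^ 2 + max (⟪a i, x⟫ - b i) 0 ^ 2) ≤
      ni * dist x z ^ 2 := by
    refine (Finset.sum_le_card_nsmul _ _ _ fun i hi =>
      infDist_sub_smul_sq_add_sq_le (ha i) hzS (hz_le i (Finset.mem_filter.1 hi).2)).trans_eq ?_
    rw [Fin.card_filter_le_val, nsmul_eq_mul]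
  rw [Finset.sum_add_distrib] at hrows
  have hres := hHoffman x
  simp only [ite_pow, Finset.sum_ite, not_lt] at hres
  rw [hxz] at hres ⊢
  exact weighted_mean_le_of_hoffman (by exact_mod_cast hm) (by exact_mod_cast hni) hβ.le
    dist_nonneg (by positivity) hres (by linarith)

/-- **Lemma (one-step expected progress of Algorithm 1).**
For a standardized system with nonempty feasible set `S`, an `(m, β)` row paving `T` of the
equality submatrix `A_=`, a Hoffman constant `L`, `n_i ≥ 1`, and `p = βm/(n_i + βm)`:
if `x_τ` denotes the orthogonal projection of `x` onto `{y : A_τ y = b_τ}` for `τ ∈ T`, and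
`x_i = x − max(⟪a i, x⟫ − b i, 0) • a i` for `i ∈ I_≤`, then
`p (1/m) Σ_τ d(x_τ, S)² + (1 − p)(1/n_i) Σ_{i ∈ I_≤} d(x_i, S)²
  ≤ (1 − 1/(L²(n_i + βm))) d(x, S)²`. -/
theorem algorithm1_one_step_expected_progress
    {ne ni d m : ℕ} (hni : 0 < ni) (hm : 0 < m)
    (a : Fin (ne + ni) → EuclideanSpace ℝ (Fin d)) (b : Fin (ne + ni) → ℝ)
    (ha : ∀ i, ‖a i‖ = 1)
    (S : Set (EuclideanSpace ℝ (Fin d)))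
    (hSdef : S = {x | (∀ i : Fin (ne + ni), (i : ℕ) < ne → ⟪a i, x⟫ = b i) ∧
                      (∀ i : Fin (ne + ni), ne ≤ (i : ℕ) → ⟪a i, x⟫ ≤ b i)})
    (hSne : S.Nonempty)
    (β : ℝ) (hβ : 0 < β)
    (T : Fin m → Finset (Fin (ne + ni)))
    (hT : IsRowPaving a (Finset.univ.filter fun i : Fin (ne + ni) => (i : ℕ) < ne) m β T)
    (L : ℝ) (hL : 0 < L)
    (hHoffman : ∀ x : EuclideanSpace ℝ (Fin d), Metric.infDist x S ≤
      L * Real.sqrt (∑ i : Fin (ne + ni), (if (i : ℕ) < ne then ⟪a i, x⟫ - b i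
                           else max (⟪a i, x⟫ - b i) 0) ^ 2))
    (x : EuclideanSpace ℝ (Fin d))
    -- xτ k is the orthogonal projection of x onto {y : A_(T k) y = b_(T k)}
    (xτ : Fin m → EuclideanSpace ℝ (Fin d))
    (hproj : ∀ k : Fin m,
      (∀ i ∈ T k, ⟪a i, xτ k⟫ = b i) ∧
      (∀ y : EuclideanSpace ℝ (Fin d), (∀ i ∈ T k, ⟪a i, y⟫ = b i) → ‖x - xτ k‖ ≤ ‖x - y‖)) :
    (β * m / (ni + β * m)) * ((1 / m) * ∑ k, Metric.infDist (xτ k) S ^ 2) +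
        (1 - β * m / (ni + β * m)) *
          ((1 / ni) * ∑ i ∈ (Finset.univ.filter fun i : Fin (ne + ni) => ne ≤ (i : ℕ)),
            Metric.infDist (x - max (⟪a i, x⟫ - b i) 0 • a i) S ^ 2) ≤
      (1 - 1 / (L ^ 2 * (ni + β * m))) * Metric.infDist x S ^ 2 :=
  algorithm1_one_step_expected_progress_general hni hm a b ha S hSdef hSne β hβ T hT L hHoffman x xτ
    hproj
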